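/- With the seven states and probabilities of the previous setup, the matrix $A = \frac{1}{\Delta t}\sum_{i=1}^7 p_i \, \Delta Y^i (\Delta Y^i)^T$ equals the $3\times 3$ matrix with entries $a_{11}=f_1+c_{1,1}^2 g_1+c_{1,2}^2 g_2$, $a_{12}=a_{21}=c_{1,1}c_{2,1}g_1$, $a_{13}=a_{31}=c_{1,2}c_{3,2}g_2$, $a_{22}=f_2+c_{2,1}^2 g_1+c_{2,2}^2 g_3$, $a_{23}=a_{32}=c_{2,2}c_{3,1}g_3$, $a_{33}=f_3+c_{3,2}^2 g_2+c_{3,1}^2 g_3$. -/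

import Mathlib

open Matrix

theorem sum_smul_vecMulVec_self_of_last_eq_zero {R m : Type*} [Semiring R] {n : ℕ}
    (p : Fin (n + 1) → R) (v : Fin (n + 1) → m → R) (hv : v (Fin.last n) = 0) :
    ∑ i, p i • vecMulVec (v i) (v i) =
      ∑ i : Fin n, p i.castSucc • vecMulVec (v i.castSucc) (v i.castSucc) := by
  rw [Fin.sum_univ_castSucc, hv, zero_vecMulVec, smul_zero, add_zero]

theorem one_div_smul_sum_mul_smul {K M ι : Type*} [Field K] [AddCommGroup M] [Module K M]
    (s : Finset ι) {t : K} (ht : t ≠ 0) (w : ι → K) (x : ι → M) :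
    (1 / t) • ∑ i ∈ s, (w i * t) • x i = ∑ i ∈ s, w i • x i := by
  simp_rw [mul_comm _ t, mul_smul, ← Finset.smul_sum, smul_smul, one_div_mul_cancel ht, one_smul]

theorem one_div_smul_sum_smul_vecMulVec_self_of_last_eq_zero {K m : Type*} [Field K] {n : ℕ}
    {t : K} (ht : t ≠ 0) (w : Fin n → K) (p : Fin (n + 1) → K) (v : Fin (n + 1) → m → K)
    (hp : ∀ i, p i.castSucc = w i * t) (hv : v (Fin.last n) = 0) :
    (1 / t) • ∑ i, p i • vecMulVec (v i) (v i) =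
      ∑ i : Fin n, w i • vecMulVec (v i.castSucc) (v i.castSucc) := by
  simp_rw [sum_smul_vecMulVec_self_of_last_eq_zero p v hv, hp]
  exact one_div_smul_sum_mul_smul _ ht _ _

theorem diffusion_matrix_identity_general
    (c11 c12 c21 c22 c31 c32 f1 f2 f3 g1 g2 g3 Δt : ℝ)
    (hΔt : 0 < Δt)
    (ΔY : Fin 7 → (Fin 3 → ℝ)) (p : Fin 7 → ℝ)
    (hY : ΔY = ![![1,0,0], ![0,1,0], ![0,0,1], ![-c11,-c21,0],
      ![-c12,0,-c32], ![0,-c22,-c31], ![0,0,0]])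
    (hp : p = ![f1*Δt, f2*Δt, f3*Δt, g1*Δt, g2*Δt, g3*Δt,
      1 - (f1*Δt + f2*Δt + f3*Δt + g1*Δt + g2*Δt + g3*Δt)]) :
    (1/Δt) • ∑ i, p i • vecMulVec (ΔY i) (ΔY i) =
      !![f1 + c11^2*g1 + c12^2*g2, c11*c21*g1, c12*c32*g2;
         c11*c21*g1, f2 + c21^2*g1 + c22^2*g3, c22*c31*g3;
         c12*c32*g2, c22*c31*g3, f3 + c32^2*g2 + c31^2*g3] := by
  subst hY hp
  rw [one_div_smul_sum_smul_vecMulVec_self_of_last_eq_zero hΔt.ne' ![f1, f2, f3, g1, g2, g3] _ _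
    ?weights ?rest]
  case weights => intro i; fin_cases i <;> rfl
  case rest => ext k; fin_cases k <;> rfl
  ext a b
  fin_cases a <;> fin_cases b <;> simp [Fin.sum_univ_six] <;> ring

theorem diffusion_matrix_identity
    (c11 c12 c21 c22 c31 c32 f1 f2 f3 g1 g2 g3 Δt : ℝ)
    (hc11 : 0 ≤ c11) (hc12 : 0 ≤ c12) (hc21 : 0 ≤ c21) (hc22 : 0 ≤ c22)
    (hc31 : 0 ≤ c31) (hc32 : 0 ≤ c32)
    (hf1 : 0 ≤ f1) (hf2 : 0 ≤ f2) (hf3 : 0 ≤ f3)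
    (hg1 : 0 ≤ g1) (hg2 : 0 ≤ g2) (hg3 : 0 ≤ g3)
    (hΔt : 0 < Δt)
    (ΔY : Fin 7 → (Fin 3 → ℝ)) (p : Fin 7 → ℝ)
    (hY : ΔY = ![![1,0,0], ![0,1,0], ![0,0,1], ![-c11,-c21,0],
      ![-c12,0,-c32], ![0,-c22,-c31], ![0,0,0]])
    (hp : p = ![f1*Δt, f2*Δt, f3*Δt, g1*Δt, g2*Δt, g3*Δt,
      1 - (f1*Δt + f2*Δt + f3*Δt + g1*Δt + g2*Δt + g3*Δt)])
    (hpos : ∀ i, 0 ≤ p i) (hsum : ∑ i, p i = 1) :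
    (1/Δt) • ∑ i, p i • vecMulVec (ΔY i) (ΔY i) =
      !![f1 + c11^2*g1 + c12^2*g2, c11*c21*g1, c12*c32*g2;
         c11*c21*g1, f2 + c21^2*g1 + c22^2*g3, c22*c31*g3;
         c12*c32*g2, c22*c31*g3, f3 + c32^2*g2 + c31^2*g3] :=
  diffusion_matrix_identity_general c11 c12 c21 c22 c31 c32 f1 f2 f3 g1 g2 g3 Δt hΔt ΔY p hY hp
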